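/- arXiv:2604.12045 — 6 statements merged into one kernel-verified Lean document; each statement's English description precedes it below -/
import Mathlib

section
/- Let f : ℝⁿ → ℝ be continuously differentiable, invex (every point where the gradient vanishes is a global minimum), and increasing at infinity (for every x there is a compact set K such that f(z) > f(x) for all z outside K). Then for every c ∈ ℝ, the sublevel set {x : f(x) ≤ c} is connected. -/
/-!
For `c < β < α`, the map `x ↦ x - h φ(f x) ∇f x`, with a cutoff `φ` vanishing on `{f ≤ β}` and
equal to `1` on `{f ≥ α}`, fixes `{f ≤ β}` and does not increase `f` on a compact sublevel set
`{f ≤ L}`. By invexity every critical value is the minimum, so `‖∇f‖` is bounded below on the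
compact set `{β ≤ f ≤ L}`; for a small step `h` the map then lowers `f` by a fixed amount wherever
`f ≥ α`, and finitely many iterations push `{f ≤ L}` into `{f ≤ α}`. Applied to a path between two
points of `{f ≤ c}`, this joins them by a path in `{f ≤ α}` for every `α > c`. If `{f ≤ c}` were
split by two disjoint open sets, compactness would make them cover some `{f ≤ α}` with `α > c`,
which such a path cannot cross.
-/

open Set Metric InnerProductSpace
open scoped Gradient

section Sublevel

variable {X : Type*} [TopologicalSpace X] {f : X → ℝ}

theorem exists_sublevel_subset_of_isOpen (hf : Continuous f) {c α₀ : ℝ} (hc : c < α₀)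
    (hK : IsCompact {x | f x ≤ α₀}) {W : Set X} (hW : IsOpen W) (hsub : {x | f x ≤ c} ⊆ W) :
    ∃ α, c < α ∧ {x | f x ≤ α} ⊆ W := by
  obtain ⟨α, hcα, hα⟩ := (hK.diff hW).exists_forall_le' hf.continuousOn (a := c)
    fun x hx => lt_of_not_ge fun hxc => hx.2 (hsub hxc)
  obtain ⟨γ, hcγ, hγ⟩ := exists_between (lt_min hcα hc)
  refine ⟨γ, hcγ, fun x hx => by_contra fun hxW => ?_⟩
  have hx' : f x < min α α₀ := lt_of_le_of_lt hx hγ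
  exact (hα x ⟨hx'.le.trans (min_le_right _ _), hxW⟩).not_gt (hx'.trans_le (min_le_left _ _))

theorem isPreconnected_sublevel_of_joinedIn [NormalSpace X] (hf : Continuous f) {c α₀ : ℝ}
    (hc : c < α₀) (hK : IsCompact {x | f x ≤ α₀})
    (hjoin : ∀ α, c < α → ∀ a b, f a ≤ c → f b ≤ c → JoinedIn {x | f x ≤ α} a b) :
    IsPreconnected {x | f x ≤ c} := by
  rw [isPreconnected_iff_subset_of_fully_disjoint_closed (isClosed_le hf continuous_const)]
  intro u v hu hv hcover huv
  obtain ⟨U, V, hU, hV, huU, hvV, hUV⟩ := normal_separation hu hv huv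
  obtain ⟨α, hcα, hα⟩ := exists_sublevel_subset_of_isOpen hf hc hK (hU.union hV)
    (hcover.trans (union_subset_union huU hvV))
  by_contra! h
  obtain ⟨⟨a, ha, hau⟩, b, hb, hbv⟩ := And.intro (not_subset.1 h.1) (not_subset.1 h.2)
  obtain ⟨γ, hγ⟩ := hjoin α hcα b a hb ha
  have hγU : range γ ⊆ U :=
    (isPreconnected_range γ.continuous).subset_left_of_subset_union hU hV hUV
      (range_subset_iff.2 fun t => hα (hγ t))
      ⟨b, ⟨0, γ.source⟩, huU ((hcover hb).resolve_right hbv)⟩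
  exact hUV.ne_of_mem (hγU ⟨1, γ.target⟩) (hvV ((hcover ha).resolve_left hau)) rfl

end Sublevel

theorem exists_iterate_le_of_forall_le_sub {X : Type*} (f : X → ℝ) (T : X → X) {L α ρ : ℝ}
    (hρ : 0 < ρ) (hmono : ∀ x, f x ≤ L → f (T x) ≤ f x)
    (hdec : ∀ x, f x ≤ L → α ≤ f x → f (T x) ≤ f x - ρ) :
    ∃ N : ℕ, ∀ x, f x ≤ L → f (T^[N] x) ≤ α := by
  have hbound : ∀ k : ℕ, ∀ x, f x ≤ L → f (T^[k] x) ≤ max α (f x - k * ρ) := by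
    intro k
    induction k with
    | zero => intro x _; simp
    | succ k ih =>
      intro x hx
      rw [Function.iterate_succ_apply]
      refine (ih (T x) ((hmono x hx).trans hx)).trans (max_le (le_max_left _ _) ?_)
      have hkρ : 0 ≤ (k : ℝ) * ρ := by positivity
      rcases le_or_gt α (f x) with hαx | hxα
      · have := hdec x hx hαx
        push_cast
        exact le_max_of_le_right (by linarith)
      · have := hmono x hx
        exact le_max_of_le_left (by linarith)
  obtain ⟨N, hN⟩ := exists_nat_ge ((L - α) / ρ)
  rw [div_le_iff₀ hρ] at hN
  exact ⟨N, fun x hx => (hbound N x hx).trans (max_le le_rfl (by linarith))⟩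

section Gradient

variable {F : Type*} [NormedAddCommGroup F] [InnerProductSpace ℝ F] [CompleteSpace F]
  {f : F → ℝ}

theorem ContDiff.continuous_gradient (hf : ContDiff ℝ 1 f) : Continuous (∇ f) :=
  (toDual ℝ F).symm.continuous.comp (hf.continuous_fderiv one_ne_zero)

theorem exists_pos_forall_le_sub_smul_gradient (hf : ContDiff ℝ 1 f) {K : Set F}
    (hK : IsCompact K) {ε : ℝ} (hε : 0 < ε) :
    ∃ h > 0, ∀ x ∈ K, ∀ t ∈ Icc 0 h,
      f (x - t • ∇ f x) ≤ f x - t * ‖∇ f x‖ * (‖∇ f x‖ - ε) := by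
  have hf' := hf.continuous_fderiv one_ne_zero
  obtain ⟨δ, hδ, hfδ⟩ := mem_uniformity_dist.1 <| hK.uniformContinuousAt_of_continuousAt
    (fderiv ℝ f) (fun x _ => hf'.continuousAt) (dist_mem_uniformity hε)
  obtain ⟨C, hC⟩ := hK.exists_bound_of_continuousOn hf.continuous_gradient.continuousOn
  refine ⟨δ / (|C| + 1), by positivity, fun x hx t ht => ?_⟩
  set g := ∇ f x
  have hstep : t * ‖g‖ < δ := calc
    t * ‖g‖ ≤ δ / (|C| + 1) * |C| :=
      mul_le_mul ht.2 ((hC x hx).trans (le_abs_self C)) (norm_nonneg _) (by positivity)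
    _ < δ := by
      rw [div_mul_eq_mul_div, div_lt_iff₀ (by positivity)]
      nlinarith
  have hnorm : ‖x - t • g - x‖ = t * ‖g‖ := by
    rw [sub_sub_cancel_left, norm_neg, norm_smul, Real.norm_of_nonneg ht.1]
  have hy : x - t • g ∈ ball x δ := by
    rwa [mem_ball, dist_eq_norm, hnorm]
  have hderiv : ∀ z ∈ ball x δ, ‖fderiv ℝ f z - fderiv ℝ f x‖ ≤ ε := fun z hz => by
    rw [← dist_eq_norm, dist_comm]
    exact (hfδ (mem_ball'.1 hz) hx).le
  have hmvt := (convex_ball x δ).norm_image_sub_le_of_norm_fderiv_le'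
    (fun z _ => hf.differentiable one_ne_zero z) hderiv (mem_ball_self hδ) hy
  have hlin : fderiv ℝ f x (x - t • g - x) = -(t * ‖g‖ ^ 2) := by
    rw [sub_sub_cancel_left, map_neg, ← inner_gradient_left, real_inner_smul_right,
      real_inner_self_eq_norm_sq]
  rw [hlin, hnorm, Real.norm_eq_abs] at hmvt
  nlinarith [(abs_le.1 hmvt).2]

theorem exists_descent_map (hf : ContDiff ℝ 1 f) {L β α : ℝ} (hL : IsCompact {x | f x ≤ L})
    (hβα : β < α) (hcrit : ∀ x, ∇ f x = 0 → f x < β) :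
    ∃ T : F → F, ∃ ρ > 0, Continuous T ∧ (∀ x, f x ≤ β → T x = x) ∧
      (∀ x, f x ≤ L → f (T x) ≤ f x) ∧ ∀ x, f x ≤ L → α ≤ f x → f (T x) ≤ f x - ρ := by
  have hg := hf.continuous_gradient
  obtain ⟨ε, hε, hεle⟩ :=
    (hL.inter_right (isClosed_le continuous_const hf.continuous)).exists_forall_le'
      hg.norm.continuousOn (a := 0) fun x hx => norm_pos_iff.2 fun h0 => (hcrit x h0).not_ge hx.2
  obtain ⟨h, hh, hdesc⟩ := exists_pos_forall_le_sub_smul_gradient hf hL (half_pos hε)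
  set φ : F → ℝ := fun x => projIcc (0 : ℝ) 1 zero_le_one ((f x - β) / (α - β))
  have hφ : ∀ x, h * φ x ∈ Icc 0 h := fun x =>
    ⟨mul_nonneg hh.le (projIcc _ _ _ _).2.1, mul_le_of_le_one_right hh.le (projIcc _ _ _ _).2.2⟩
  have hφ0 : ∀ x, f x ≤ β → φ x = 0 := fun x hx => by
    simp only [φ, projIcc_of_le_left _
      (div_nonpos_of_nonpos_of_nonneg (sub_nonpos.2 hx) (sub_nonneg.2 hβα.le))]
  have hφ1 : ∀ x, α ≤ f x → φ x = 1 := fun x hx => by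
    simp only [φ, projIcc_of_right_le _
      ((one_le_div (sub_pos.2 hβα)).2 (by linarith : α - β ≤ f x - β))]
  have hdescent : ∀ x, f x ≤ L →
      f (x - (h * φ x) • ∇ f x) ≤ f x - h * φ x * (ε * (ε / 2)) := fun x hx => by
    rcases le_or_gt (f x) β with hxβ | hβx
    · simp [hφ0 x hxβ]
    · have hgx := hεle x ⟨hx, hβx.le⟩
      nlinarith [hdesc x hx _ (hφ x), mul_nonneg (mul_nonneg (hφ x).1 (sub_nonneg.2 hgx))
        (by positivity : 0 ≤ ‖∇ f x‖ + ε / 2)]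
  refine ⟨fun x => x - (h * φ x) • ∇ f x, h * (ε * (ε / 2)), by positivity, ?_, ?_, ?_, ?_⟩
  · have : Continuous φ := continuous_subtype_val.comp
      (continuous_projIcc.comp ((hf.continuous.sub continuous_const).div_const _))
    fun_prop
  · intro x hx
    simp [hφ0 x hx]
  · intro x hx
    nlinarith [hdescent x hx, mul_nonneg (hφ x).1 (by positivity : 0 ≤ ε * (ε / 2))]
  · intro x hx hαx
    simpa [hφ1 x hαx] using hdescent x hx

theorem exists_deformation (hf : ContDiff ℝ 1 f) {L β α : ℝ} (hL : IsCompact {x | f x ≤ L})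
    (hβα : β < α) (hcrit : ∀ x, ∇ f x = 0 → f x < β) :
    ∃ Φ : F → F, Continuous Φ ∧ (∀ x, f x ≤ β → Φ x = x) ∧ ∀ x, f x ≤ L → f (Φ x) ≤ α := by
  obtain ⟨T, ρ, hρ, hT, hfix, hmono, hdec⟩ := exists_descent_map hf hL hβα hcrit
  obtain ⟨N, hN⟩ := exists_iterate_le_of_forall_le_sub f T hρ hmono hdec
  exact ⟨T^[N], hT.iterate N, fun x hx => Function.iterate_fixed (hfix x hx) N, hN⟩

theorem joinedIn_sublevel_of_critical_values_le (hf : ContDiff ℝ 1 f)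
    (hcompact : ∀ x, IsCompact {y | f y ≤ f x}) {c α : ℝ} (hcrit : ∀ x, ∇ f x = 0 → f x ≤ c)
    (hα : c < α) {a b : F} (ha : f a ≤ c) (hb : f b ≤ c) :
    JoinedIn {x | f x ≤ α} a b := by
  let γ := (PathConnectedSpace.joined a b).somePath
  obtain ⟨m, -, hm⟩ := (isCompact_range γ.continuous).exists_isMaxOn (range_nonempty γ)
    hf.continuous.continuousOn
  obtain ⟨Φ, hΦ, hfix, hΦα⟩ :=
    exists_deformation hf (hcompact m) (by linarith : (c + α) / 2 < α)
      fun x hx => by linarith [hcrit x hx]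
  have hγ : JoinedIn {x | f x ≤ f m} a b := ⟨γ, fun t => hm (mem_range_self t)⟩
  have := hγ.map hΦ
  rw [hfix a (by linarith), hfix b (by linarith)] at this
  exact this.mono (image_subset_iff.2 hΦα)

end Gradient

/-- Sublevel sets of a C¹ invex function that is increasing at infinity are connected. -/
theorem sublevel_connected_of_invex {n : ℕ}
    (f : EuclideanSpace ℝ (Fin n) → ℝ)
    (hf : ContDiff ℝ 1 f)
    (hinvex : ∀ x, fderiv ℝ f x = 0 → ∀ y, f x ≤ f y)
    (hinc : ∀ x, ∃ K : Set (EuclideanSpace ℝ (Fin n)),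
      IsCompact K ∧ ∀ z ∉ K, f x < f z)
    (c : ℝ) :
    IsPreconnected {x | f x ≤ c} := by
  have hcompact : ∀ x, IsCompact {y | f y ≤ f x} := fun x => by
    obtain ⟨K, hK, hfK⟩ := hinc x
    exact hK.of_isClosed_subset (isClosed_le hf.continuous continuous_const)
      fun y hy => by_contra fun hyK => (hfK y hyK).not_ge hy
  by_cases hall : ∀ x, f x ≤ c
  · simpa [hall] using isPreconnected_univ
  obtain ⟨w, hw⟩ : ∃ w, c < f w := by simpa using hall
  refine isPreconnected_sublevel_of_joinedIn hf.continuous hw (hcompact w) fun α hα a b ha hb =>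
    joinedIn_sublevel_of_critical_values_le hf hcompact (fun x hx => ?_) hα ha hb
  exact (hinvex x (by rw [← toDual_gradient, hx, map_zero]) a).trans ha
end

section
/- Let f : ℝⁿ → ℝ be differentiable and satisfy the α-PL condition globally for some α > 1 and μ > 0. Let P be the set of minimizers of f. Then for all x, f(x) − min f ≥ ((α−1)/α)^{α/(α−1)} · μ^{1/(α−1)} · d(x, P)^{α/(α−1)}, i.e., f satisfies an α/(α−1)-growth condition. -/
/-!
With `p = (α - 1) / α`, the α-PL inequality says exactly that `g = (f - f⋆) ^ p` has slope at
least `c = p μ ^ (1 / α)` off the minimizer set `P`. Such a `g ≥ 0` satisfies `c · d(x, P) ≤ g x`: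
otherwise pick `σ < c` with `g x < σ · d(x, P)`; a minimizer `y` of `g + σ · dist(·, x)` on the
closed ball of radius `d(x, P)` lies in the open ball, hence off `P`, and there `g` has slope at
most `σ`. Raising `c · d(x, P) ≤ g x` to the power `1 / p` gives the growth bound.
-/

open Filter Topology Set Metric

theorem HasFDerivAt.norm_le_of_eventually_le_add_mul_dist {E : Type*} [NormedAddCommGroup E]
    [NormedSpace ℝ E] {φ : E → ℝ} {φ' : E →L[ℝ] ℝ} {y : E} {K : ℝ} (hφ : HasFDerivAt φ φ' y)
    (hK : 0 ≤ K) (h : ∀ᶠ z in 𝓝 y, φ y ≤ φ z + K * dist z y) : ‖φ'‖ ≤ K := by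
  have hdir : ∀ v, -(K * ‖v‖) ≤ φ' v := by
    intro v
    have hline : HasDerivAt (fun t : ℝ => y + t • v) v 0 := by
      simpa using ((hasDerivAt_id (0 : ℝ)).smul_const v).const_add y
    have hψ : HasDerivAt (fun t : ℝ => φ (y + t • v) + t * (K * ‖v‖)) (φ' v + K * ‖v‖) 0 := by
      have hφ0 : HasFDerivAt φ φ' (y + (0 : ℝ) • v) := by simpa using hφ
      exact (hφ0.comp_hasDerivAt 0 hline).add (hasDerivAt_mul_const (K * ‖v‖))
    have hmin : IsLocalMinOn (fun t : ℝ => φ (y + t • v) + t * (K * ‖v‖)) (Ici 0) 0 := by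
      filter_upwards [nhdsWithin_le_nhds (hline.continuousAt.tendsto.eventually (by simpa using h)),
        self_mem_nhdsWithin] with t ht (ht0 : 0 ≤ t)
      simpa [dist_eq_norm, norm_smul, abs_of_nonneg ht0, mul_left_comm, mul_assoc] using ht
    have hone : (1 : ℝ) ∈ posTangentConeAt (Ici 0) 0 :=
      mem_posTangentConeAt_of_segment_subset (by simp [segment_eq_Icc, Icc_subset_Ici_self])
    have := hmin.hasFDerivWithinAt_nonneg hψ.hasFDerivAt.hasFDerivWithinAt hone
    simp only [ContinuousLinearMap.toSpanSingleton_apply, smul_eq_mul, one_mul] at this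
    linarith
  exact φ'.opNorm_le_bound hK fun v => abs_le.2 ⟨hdir v, by simpa using hdir (-v)⟩

theorem mul_infDist_le_of_le_norm_fderiv {E : Type*} [NormedAddCommGroup E] [NormedSpace ℝ E]
    [ProperSpace E] {g : E → ℝ} {P : Set E} {c : ℝ} (hg : Continuous g) (hg0 : ∀ x, 0 ≤ g x)
    (hslope : ∀ y ∉ P, DifferentiableAt ℝ g y ∧ c ≤ ‖fderiv ℝ g y‖) (x : E) :
    c * infDist x P ≤ g x := by
  set r := infDist x P
  by_contra! hlt
  have hr : 0 < r := (show 0 ≤ r from infDist_nonneg).lt_of_ne fun h => by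
    rw [← h, mul_zero] at hlt
    linarith [hg0 x]
  obtain ⟨σ, hσx, hσc⟩ := exists_between ((div_lt_iff₀ hr).2 hlt)
  have hσ : 0 < σ := (div_nonneg (hg0 x) hr.le).trans_lt hσx
  have hgx : g x < σ * r := (div_lt_iff₀ hr).1 hσx
  obtain ⟨y, -, hymin⟩ := (isCompact_closedBall x r).exists_isMinOn (nonempty_closedBall.2 hr.le)
    (f := fun z => g z + σ * dist z x) (by fun_prop)
  have hyx : dist y x < r := by
    have := hymin (mem_closedBall_self hr.le)
    simp only [mem_ofPred_eq, dist_self, mul_zero, add_zero] at this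
    exact (mul_lt_mul_iff_right₀ hσ).1 (by linarith [hg0 y])
  have hyP : y ∉ P := fun hy => (infDist_le_dist_of_mem hy).not_gt (by rwa [dist_comm])
  obtain ⟨hdiff, hc⟩ := hslope y hyP
  have hcalm : ∀ᶠ z in 𝓝 y, g y ≤ g z + σ * dist z y := by
    filter_upwards [isOpen_ball.mem_nhds (mem_ball.2 hyx)] with z hz
    have := hymin (ball_subset_closedBall hz)
    simp only [mem_ofPred_eq] at this
    nlinarith [dist_triangle z y x]
  linarith [hdiff.hasFDerivAt.norm_le_of_eventually_le_add_mul_dist hσ.le hcalm]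

theorem le_norm_fderiv_rpow_sub_of_PL {E : Type*} [NormedAddCommGroup E] [NormedSpace ℝ E]
    {f : E → ℝ} {y : E} {fstar α μ : ℝ} (hα : 1 ≤ α) (hμ : 0 ≤ μ) (hf : DifferentiableAt ℝ f y)
    (hy : fstar < f y) (hPL : μ * (f y - fstar) ≤ ‖fderiv ℝ f y‖ ^ α) :
    (α - 1) / α * μ ^ (1 / α) ≤ ‖fderiv ℝ (fun z => (f z - fstar) ^ ((α - 1) / α)) y‖ := by
  set p := (α - 1) / α
  set s := f y - fstar
  have hs : 0 < s := sub_pos.2 hy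
  have hp : 0 ≤ p := div_nonneg (by linarith) (by linarith)
  have hroot : (μ * s) ^ (1 / α) ≤ ‖fderiv ℝ f y‖ := by
    calc (μ * s) ^ (1 / α) ≤ (‖fderiv ℝ f y‖ ^ α) ^ (1 / α) := by gcongr
      _ = ‖fderiv ℝ f y‖ := by
        rw [one_div, Real.rpow_rpow_inv (norm_nonneg _) (by linarith)]
  have hexp : s ^ (p - 1) * s ^ (1 / α) = 1 := by
    have : p - 1 + 1 / α = 0 := by
      simp only [p]
      field_simp
      ring
    rw [← Real.rpow_add hs, this, Real.rpow_zero]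
  rw [((hf.hasFDerivAt.sub_const fstar).rpow_const (Or.inl hs.ne')).fderiv, norm_smul,
    Real.norm_of_nonneg (by positivity)]
  calc p * μ ^ (1 / α) = p * s ^ (p - 1) * (μ * s) ^ (1 / α) := by
        rw [Real.mul_rpow hμ hs.le]
        linear_combination (-(p * μ ^ (1 / α))) * hexp
    _ ≤ p * s ^ (p - 1) * ‖fderiv ℝ f y‖ := by gcongr

/-- The global α-PL condition implies an α/(α−1)-growth condition. -/
theorem alphaPL_implies_growth {n : ℕ}
    (f : EuclideanSpace ℝ (Fin n) → ℝ) (fstar : ℝ) (α μ : ℝ)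
    (hf : Differentiable ℝ f)
    (hα : 1 < α) (hμ : 0 < μ)
    (hmin : ∀ x, fstar ≤ f x)
    (hPL : ∀ x, μ * (f x - fstar) ≤ ‖fderiv ℝ f x‖ ^ α) :
    ∀ x, ((α - 1) / α) ^ (α / (α - 1)) * μ ^ (1 / (α - 1)) *
        (Metric.infDist x {y | f y = fstar}) ^ (α / (α - 1)) ≤ f x - fstar := by
  intro x
  set p := (α - 1) / α
  set q := α / (α - 1)
  have hα1 : α - 1 ≠ 0 := by linarith
  have hp : 0 < p := div_pos (by linarith) (by linarith)
  have hpq : p * q = 1 := by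
    simp only [p, q]
    field_simp
  have hμq : (μ ^ (1 / α)) ^ q = μ ^ (1 / (α - 1)) := by
    rw [← Real.rpow_mul hμ.le]
    congr 1
    simp only [q]
    field_simp
  have hslope : ∀ y ∉ {y | f y = fstar}, DifferentiableAt ℝ (fun z => (f z - fstar) ^ p) y ∧
      p * μ ^ (1 / α) ≤ ‖fderiv ℝ (fun z => (f z - fstar) ^ p) y‖ := fun y hy =>
    have hy : fstar < f y := (hmin y).lt_of_ne (Ne.symm hy)
    ⟨((hf y).sub_const fstar).rpow_const (Or.inl (sub_pos.2 hy).ne'),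
      le_norm_fderiv_rpow_sub_of_PL hα.le hμ.le (hf y) hy (hPL y)⟩
  have hdist := mul_infDist_le_of_le_norm_fderiv
    ((Real.continuous_rpow_const hp.le).comp (hf.continuous.sub continuous_const))
    (fun z => Real.rpow_nonneg (sub_nonneg.2 (hmin z)) p) hslope x
  calc p ^ q * μ ^ (1 / (α - 1)) * infDist x {y | f y = fstar} ^ q
      = (p * μ ^ (1 / α) * infDist x {y | f y = fstar}) ^ q := by
        rw [Real.mul_rpow (by positivity) infDist_nonneg, Real.mul_rpow hp.le (by positivity), hμq]
    _ ≤ ((f x - fstar) ^ p) ^ q :=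
      Real.rpow_le_rpow (mul_nonneg (by positivity) infDist_nonneg) hdist (by positivity)
    _ = f x - fstar := by rw [← Real.rpow_mul (sub_nonneg.2 (hmin x)), hpq, Real.rpow_one]
end

section
/- Let f : ℝⁿ × ℝᵐ → ℝ be continuously differentiable such that for each parameter p ∈ ℝᵐ, the function a ↦ f(a, p) is incave (every stationary point in a is a global maximum), decreasing at infinity in a, and hence attains its maximum on a compact, connected set BR(p) = argmax_a f(a, p). Then the set-valued map p ↦ BR(p) is outer semicontinuous: for every p̄ and every open V ⊇ BR(p̄), there exists an open U ∋ p̄ with BR(p) ⊆ V for all p ∈ U. -/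
/-!
Choose a closed thickening `K ⊆ V` of the compact set `BR(p̄)`. On the compact shell between
`K` and the open thickening, `f (·, p̄)` stays below its maximum `f (ā, p̄)`, and by compactness
`f (·, p) < f (ā, p)` on the shell for all `p` near `p̄`. Then `f (·, p)` has a local maximum
inside `K`, which is global by incavity; as `BR(p)` is connected and misses the shell, it lies
inside `K`.

Connectedness of the argmax set is a mountain-pass argument. Were it split by disjoint open sets
`W₁`, `W₂`, some superlevel set strictly below the maximum would still lie in `W₁ ∪ W₂`. Since
there are no critical points below the maximum, finitely many gradient-ascent steps push the
segment joining maximizers in `W₁` and `W₂` into that superlevel set, while fixing its ends: a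
connected set meeting both `W₁` and `W₂`.
-/

open Metric Set Filter Topology InnerProductSpace
open scoped Gradient

lemma exists_le_iterate_of_rise_fall {X : Type*} (u : X → ℝ) (F : X → X) {a b up down : ℝ}
    (hup : 0 < up) (hab : a ≤ b - down)
    (hrise : ∀ y, a ≤ u y → u y ≤ b → u y + up ≤ u (F y))
    (hfall : ∀ y, a ≤ u y → u y - down ≤ u (F y)) :
    ∃ N : ℕ, ∀ x, a ≤ u x → b - down ≤ u (F^[N] x) := by
  have hinv : ∀ k : ℕ, ∀ x, a ≤ u x → min (a + k * up) (b - down) ≤ u (F^[k] x) := by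
    intro k x hx
    induction k with
    | zero => simpa using Or.inl hx
    | succ k ih =>
      have hy : a ≤ u (F^[k] x) := (le_min (by nlinarith [k.cast_nonneg (α := ℝ)]) hab).trans ih
      rw [Function.iterate_succ_apply']
      rcases le_or_gt (u (F^[k] x)) b with hb | hb
      · have := hrise _ hy hb
        rw [min_le_iff] at ih ⊢
        push_cast
        rcases ih with h | h
        · left; linarith
        · right; linarith
      · exact (min_le_right _ _).trans (by linarith [hfall _ hy])
  obtain ⟨N, hN⟩ := exists_nat_ge ((b - down - a) / up)
  rw [div_le_iff₀ hup] at hN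
  exact ⟨N, fun x hx => (le_min (by linarith) le_rfl).trans (hinv N x hx)⟩

lemma exists_lt_setOf_le_subset {X : Type*} [TopologicalSpace X] {g : X → ℝ}
    (hg : Continuous g) {c M : ℝ} (hc : IsCompact {x | c ≤ g x}) (hcM : c < M)
    {W : Set X} (hW : IsOpen W) (hMW : {x | M ≤ g x} ⊆ W) :
    ∃ c' < M, {x | c' ≤ g x} ⊆ W := by
  obtain ⟨ε, hε, hgap⟩ := (hc.diff hW).exists_forall_le' (f := fun x => M - g x)
    (continuous_const.sub hg).continuousOn
    fun x hx => sub_pos.2 (lt_of_not_ge fun h : M ≤ g x => hx.2 (hMW h))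
  refine ⟨max c (M - ε / 2), max_lt hcM (by linarith), fun x (hx : max c _ ≤ g x) => ?_⟩
  by_contra hxW
  have := hgap x ⟨show c ≤ g x from (le_max_left _ _).trans hx, hxW⟩
  linarith [(le_max_right c (M - ε / 2)).trans hx]

lemma isCompact_setOf_le {X : Type*} [TopologicalSpace X] {g : X → ℝ} (hg : Continuous g)
    {a : X} (h : ∃ K, IsCompact K ∧ ∀ z ∉ K, g z < g a) : IsCompact {x | g a ≤ g x} := by
  obtain ⟨K, hK, hlt⟩ := h
  exact hK.of_isClosed_subset (isClosed_le continuous_const hg) fun x hx =>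
    by_contra fun hxK => (hlt x hxK).not_ge hx

section Gradient

variable {E : Type*} [NormedAddCommGroup E] [InnerProductSpace ℝ E] [CompleteSpace E]

lemma norm_gradient (g : E → ℝ) (x : E) : ‖∇ g x‖ = ‖fderiv ℝ g x‖ :=
  (toDual ℝ E).symm.norm_map _

lemma fderiv_apply_gradient (g : E → ℝ) (x : E) : fderiv ℝ g x (∇ g x) = ‖∇ g x‖ ^ 2 := by
  rw [← inner_gradient_left, real_inner_self_eq_norm_sq]

lemma ContDiff.continuous_gradient_s9 {g : E → ℝ} (hg : ContDiff ℝ 1 g) : Continuous (∇ g) :=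
  (toDual ℝ E).symm.continuous.comp (hg.continuous_fderiv one_ne_zero)

lemma exists_forall_le_add_smul_gradient {g : E → ℝ} (hg : ContDiff ℝ 1 g) {K : Set E}
    (hK : IsCompact K) {κ : ℝ} (hκ : 0 < κ) :
    ∃ t₀ > 0, ∀ t ∈ Ioc 0 t₀, ∀ x ∈ K,
      g x + t * (‖∇ g x‖ ^ 2 - κ * ‖∇ g x‖) ≤ g (x + t • ∇ g x) := by
  have hdg : Continuous (fderiv ℝ g) := hg.continuous_fderiv one_ne_zero
  obtain ⟨G, hG⟩ := hK.exists_bound_of_continuousOn hdg.continuousOn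
  obtain ⟨η, hη, hclose⟩ := mem_uniformity_dist.1 <| hK.uniformContinuousAt_of_continuousAt _
    (fun x _ => hdg.continuousAt) (dist_mem_uniformity hκ)
  refine ⟨η / (|G| + 1), by positivity, fun t ⟨ht0, ht⟩ x hx => ?_⟩
  set w := t • ∇ g x
  have hw : ‖w‖ = t * ‖∇ g x‖ := by rw [norm_smul, Real.norm_of_nonneg ht0.le]
  have hwη : ‖w‖ < η := by
    rw [le_div_iff₀ (by positivity)] at ht
    have : ‖∇ g x‖ ≤ |G| := (norm_gradient g x ▸ hG x hx).trans (le_abs_self G)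
    rw [hw]
    nlinarith
  have hmvt := (convex_closedBall x ‖w‖).norm_image_sub_le_of_norm_fderiv_le'
    (φ := fderiv ℝ g x) (y := x + w) (fun z _ => hg.differentiable one_ne_zero z)
    (fun z hz => by
      rw [← dist_eq_norm, dist_comm]
      exact (hclose ((mem_closedBall'.1 hz).trans_lt hwη) hx).le)
    (mem_closedBall_self (norm_nonneg w)) (by simp)
  rw [add_sub_cancel_left, map_smul, fderiv_apply_gradient, smul_eq_mul, hw] at hmvt
  nlinarith [(abs_le.1 (Real.norm_eq_abs _ ▸ hmvt)).1]

lemma exists_continuous_deformation {g : E → ℝ} (hg : ContDiff ℝ 1 g) {c₀ c₁ c₂ : ℝ}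
    (hc : c₁ < c₂) (hK : IsCompact {x | c₀ ≤ g x})
    (hcrit : ∀ x, c₀ ≤ g x → g x ≤ c₂ → fderiv ℝ g x ≠ 0) :
    ∃ Φ : E → E, Continuous Φ ∧ (∀ x, fderiv ℝ g x = 0 → Φ x = x) ∧
      ∀ x, c₀ ≤ g x → c₁ ≤ g (Φ x) := by
  rcases le_or_gt c₁ c₀ with h | h
  · exact ⟨id, continuous_id, fun _ _ => rfl, fun x hx => h.trans hx⟩
  obtain ⟨δ, hδ, hδle⟩ := (hK.inter_right (isClosed_le hg.continuous continuous_const)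
    ).exists_forall_le' (hg.continuous_fderiv one_ne_zero).norm.continuousOn
      fun x hx => norm_pos_iff.2 (hcrit x hx.1 hx.2)
  obtain ⟨t₀, ht₀, hstep⟩ := exists_forall_le_add_smul_gradient hg hK (half_pos hδ)
  set t := min t₀ (16 * (c₂ - c₁) / δ ^ 2)
  have ht : t ∈ Ioc 0 t₀ := ⟨lt_min ht₀ (by have := sub_pos.2 hc; positivity), min_le_left _ _⟩
  have htδ : t * δ ^ 2 / 16 ≤ c₂ - c₁ := by
    have := (le_div_iff₀ (by positivity)).1 (min_le_right t₀ (16 * (c₂ - c₁) / δ ^ 2))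
    linarith
  set F : E → E := fun x => x + t • ∇ g x
  -- Gradient steps lose at most `t δ² / 16`, and gain `t δ² / 2` where `‖∇ g‖ ≥ δ`.
  obtain ⟨N, hN⟩ := exists_le_iterate_of_rise_fall g F (a := c₀) (b := c₂)
    (up := t * δ ^ 2 / 2) (down := t * δ ^ 2 / 16) (by have := ht.1; positivity) (by linarith)
    (fun y hy hy' => by
      have hδy := norm_gradient g y ▸ hδle y ⟨hy, hy'⟩
      nlinarith [hstep t ht y hy, mul_nonneg ht.1.le (mul_nonneg (sub_nonneg.2 hδy) hδ.le)])
    (fun y hy => by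
      nlinarith [hstep t ht y hy, mul_nonneg ht.1.le (sq_nonneg (‖∇ g y‖ - δ / 4))])
  refine ⟨F^[N], (continuous_id.add (continuous_const.smul hg.continuous_gradient_s9)).iterate N,
    fun x hx => Function.iterate_fixed (by simp [F, gradient, hx]) N,
    fun x hx => by linarith [hN x hx]⟩

theorem isPreconnected_argmax {g : E → ℝ} (hg : ContDiff ℝ 1 g)
    (hinc : ∀ a, fderiv ℝ g a = 0 → ∀ a', g a' ≤ g a)
    (hcpt : ∀ a, IsCompact {x | g a ≤ g x}) :
    IsPreconnected {a | ∀ a', g a' ≤ g a} := by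
  set B := {a | ∀ a', g a' ≤ g a}
  have hB : IsClosed B := by
    simp only [B, ofPred_forall]
    exact isClosed_iInter fun a' => isClosed_le continuous_const hg.continuous
  rw [isPreconnected_iff_subset_of_fully_disjoint_closed hB]
  intro u v hu hv hBuv huv
  by_contra! h
  obtain ⟨⟨b₁, hb₁, hb₁u⟩, ⟨b₂, hb₂, hb₂v⟩⟩ := And.imp not_subset.1 not_subset.1 h
  obtain ⟨W₁, W₂, hW₁, hW₂, huW, hvW, hW⟩ := normal_separation hu hv huv
  have hBW : B ⊆ W₁ ∪ W₂ := hBuv.trans (union_subset_union huW hvW)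
  set γ : ℝ → E := fun τ => AffineMap.lineMap b₁ b₂ τ
  have hγ : Continuous γ := AffineMap.lineMap_continuous
  obtain ⟨s, -, hsmin⟩ := isCompact_Icc.exists_isMinOn (nonempty_Icc.2 zero_le_one)
    (hg.continuous.comp hγ).continuousOn
  obtain ⟨Φ, hΦ, hfix, hΦW⟩ : ∃ Φ : E → E, Continuous Φ ∧ (∀ x ∈ B, Φ x = x) ∧
      ∀ τ ∈ Icc (0 : ℝ) 1, Φ (γ τ) ∈ W₁ ∪ W₂ := by
    by_cases hlt : g (γ s) < g b₁
    · obtain ⟨c₁, hc₁, hsub⟩ := exists_lt_setOf_le_subset hg.continuous (hcpt (γ s)) hlt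
        (hW₁.union hW₂) fun x hx => hBW fun a' => (hb₁ a').trans hx
      obtain ⟨Φ, hΦ, hfix, hup⟩ := exists_continuous_deformation hg (c₁ := c₁)
        (c₂ := (c₁ + g b₁) / 2) (by linarith) (hcpt (γ s))
        fun x _ hx h0 => by linarith [hinc x h0 b₁]
      exact ⟨Φ, hΦ, fun x hx => hfix x (IsLocalMax.fderiv_eq_zero (.of_forall hx)),
        fun τ hτ => hsub (hup _ (hsmin hτ))⟩
    · exact ⟨id, continuous_id, fun _ _ => rfl,
        fun τ hτ => hBW fun a' => (hb₁ a').trans ((not_lt.1 hlt).trans (hsmin hτ))⟩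
  obtain ⟨z, -, hz₁, hz₂⟩ := (isPreconnected_Icc.image _ (hΦ.comp hγ).continuousOn)
    W₁ W₂ hW₁ hW₂ (image_subset_iff.2 hΦW)
    ⟨b₂, ⟨1, right_mem_Icc.2 zero_le_one, by simp [γ, hfix b₂ hb₂]⟩,
      huW ((hBuv hb₂).resolve_right hb₂v)⟩
    ⟨b₁, ⟨0, left_mem_Icc.2 zero_le_one, by simp [γ, hfix b₁ hb₁]⟩,
      hvW ((hBuv hb₁).resolve_left hb₁u)⟩
  exact disjoint_left.1 hW hz₁ hz₂

theorem argmax_subset_of_forall_lt {g : E → ℝ} (hg : ContDiff ℝ 1 g)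
    (hinc : ∀ a, fderiv ℝ g a = 0 → ∀ a', g a' ≤ g a)
    (hcpt : ∀ a, IsCompact {x | g a ≤ g x}) {K s : Set E} (hK : IsCompact K) (hs : IsOpen s)
    (hsK : s ⊆ K) {a : E} (ha : a ∈ s) (hlt : ∀ x ∈ K \ s, g x < g a) :
    {x | ∀ a', g a' ≤ g x} ⊆ s := by
  obtain ⟨x₀, hx₀, hmax⟩ :=
    hK.exists_isLocalMax_mem_open hsK hg.continuous.continuousOn (hsK ha) hlt hs
  refine (isPreconnected_argmax hg hinc hcpt).subset_left_of_subset_union hs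
    hK.isClosed.isOpen_compl (disjoint_compl_right.mono_left hsK) (fun x hx => ?_)
    ⟨x₀, hinc x₀ hmax.fderiv_eq_zero, hx₀⟩
  exact (em (x ∈ K)).imp_left fun hxK =>
    by_contra fun hxs => (hlt x ⟨hxK, hxs⟩).not_ge (hx a)

end Gradient

/-- Outer semicontinuity of the best-response map of an incave function that is
decreasing at infinity in the decision variable. -/
theorem bestResponse_outer_semicontinuous {n m : ℕ}
    (f : EuclideanSpace ℝ (Fin n) → EuclideanSpace ℝ (Fin m) → ℝ)
    (hf : ContDiff ℝ 1 (fun p : EuclideanSpace ℝ (Fin n) × EuclideanSpace ℝ (Fin m) =>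
      f p.1 p.2))
    (hincave : ∀ p a, fderiv ℝ (fun a' => f a' p) a = 0 → ∀ a', f a' p ≤ f a p)
    (hdec : ∀ p a, ∃ K : Set (EuclideanSpace ℝ (Fin n)),
      IsCompact K ∧ ∀ z ∉ K, f z p < f a p) :
    ∀ pbar : EuclideanSpace ℝ (Fin m),
      ∀ V : Set (EuclideanSpace ℝ (Fin n)), IsOpen V →
        {a | ∀ a', f a' pbar ≤ f a pbar} ⊆ V →
        ∃ U : Set (EuclideanSpace ℝ (Fin m)), IsOpen U ∧ pbar ∈ U ∧
          ∀ p ∈ U, {a | ∀ a', f a' p ≤ f a p} ⊆ V := by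
  intro pbar V hV hBV
  have hslice (p) : ContDiff ℝ 1 (fun a => f a p) := hf.comp (contDiff_id.prodMk contDiff_const)
  have hcpt (p a) : IsCompact {x | f a p ≤ f x p} :=
    isCompact_setOf_le (hslice p).continuous (hdec p a)
  obtain ⟨K₀, hK₀, hlt₀⟩ := hdec pbar 0
  obtain ⟨abar, habar⟩ := (hslice pbar).continuous.exists_forall_ge' 0 <|
    mem_of_superset hK₀.compl_mem_cocompact fun z hz => (hlt₀ z hz).le
  set B := {x | f abar pbar ≤ f x pbar}
  obtain ⟨r, hr, hrV⟩ := (hcpt pbar abar).exists_cthickening_subset_open hV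
    fun x hx => hBV fun a' => (habar a').trans hx
  have hK : IsCompact (cthickening r B) := (hcpt pbar abar).cthickening
  have hlt : ∀ x ∈ cthickening r B \ thickening r B, f x pbar < f abar pbar :=
    fun x hx => lt_of_not_ge fun h => hx.2 (self_subset_thickening hr B h)
  have hev : ∀ᶠ p in 𝓝 pbar, ∀ x ∈ cthickening r B \ thickening r B, f x p < f abar p :=
    (hK.diff isOpen_thickening).eventually_forall_of_forall_eventually fun x hx =>
      (isOpen_lt (hf.continuous.comp (continuous_snd.prodMk continuous_fst))
        (hf.continuous.comp (continuous_const.prodMk continuous_fst))).mem_nhds (hlt x hx)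
  obtain ⟨U, hU, hUo, hpU⟩ := _root_.eventually_nhds_iff.1 hev
  refine ⟨U, hUo, hpU, fun p hp => ?_⟩
  exact (argmax_subset_of_forall_lt (hslice p) (hincave p) (hcpt p) hK isOpen_thickening
    (thickening_subset_cthickening r B) (self_subset_thickening hr B (le_refl (f abar pbar)))
    (hU p hp)).trans ((thickening_subset_cthickening r B).trans hrV)
end

section
/- Under the assumptions of the invex-incave minimax setting (f ∈ C¹, f(·,y) invex and increasing at infinity, f(x,·) incave and decreasing at infinity), if for every minimax point (x, y) the best-response map x' ↦ BR_y(x') = argmax_{y'} f(x', y') is locally inner Lipschitz continuous at x for y, and symmetrically for maximin points, then every minimax point and every maximin point is a saddle point, i.e., E = M̲ = M̄. -/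
/-!
At a minimax point `(x₀, y₀)`, inner Lipschitz continuity of `BR_y` yields best responses
`y(x) ∈ BR_y(x)` with `y(x) → y₀` as `x → x₀`. The function `h x = f x (y x) - f x₀ (y x)`
is then nonnegative, because `f x₀ (y x) ≤ f x₀ y₀ ≤ max f x = f x (y x)`, and vanishes at `x₀`;
by strict differentiability its derivative at `x₀` is `∂ₓ f (x₀, y₀)`, which must therefore
vanish. Invexity makes `x₀` a global minimizer of `f · y₀`, so `(x₀, y₀)` is a saddle point.
Maximin points are treated through `(y, x) ↦ -f x y`. Conversely saddle points are minimax and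
maximin because, `f` being monotone at infinity, the inner maxima and minima are attained.
-/

open Filter Topology Metric Set Function

section Points

variable {X Y : Type*}

def IsSaddlePoint (f : X → Y → ℝ) (p : X × Y) : Prop :=
  (∀ y, f p.1 y ≤ f p.1 p.2) ∧ ∀ x, f p.1 p.2 ≤ f x p.2

def IsMinimaxPoint (f : X → Y → ℝ) (p : X × Y) : Prop :=
  (∀ y, f p.1 y ≤ f p.1 p.2) ∧ ∀ x, f p.1 p.2 ≤ ⨆ y, f x y

def IsMaximinPoint (f : X → Y → ℝ) (p : X × Y) : Prop :=
  (∀ x, f p.1 p.2 ≤ f x p.2) ∧ ∀ y, (⨅ x, f x y) ≤ f p.1 p.2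

theorem IsSaddlePoint.isMinimaxPoint {f : X → Y → ℝ} {p : X × Y} (hp : IsSaddlePoint f p)
    (hbdd : ∀ x, BddAbove (range (f x))) : IsMinimaxPoint f p :=
  ⟨hp.1, fun x => (hp.2 x).trans (le_ciSup (hbdd x) p.2)⟩

theorem IsSaddlePoint.isMaximinPoint {f : X → Y → ℝ} {p : X × Y} (hp : IsSaddlePoint f p)
    (hbdd : ∀ y, BddBelow (range (f · y))) : IsMaximinPoint f p :=
  ⟨hp.2, fun y => (ciInf_le (hbdd y) p.1).trans (hp.1 y)⟩

end Points

section InnerLipschitz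

variable {X Y : Type*} [NormedAddCommGroup X] [PseudoMetricSpace Y]

def IsLocallyInnerLipschitzAt (S : X → Set Y) (x₀ : X) (y₀ : Y) : Prop :=
  y₀ ∈ S x₀ ∧ ∃ κ : ℝ, 0 ≤ κ ∧ ∃ N ∈ 𝓝 x₀, ∀ x ∈ N, infDist y₀ (S x) ≤ κ * ‖x - x₀‖

theorem IsLocallyInnerLipschitzAt.exists_tendsto_selection {S : X → Set Y} {x₀ : X} {y₀ : Y}
    (hS : IsLocallyInnerLipschitzAt S x₀ y₀) (hne : ∀ᶠ x in 𝓝 x₀, (S x).Nonempty) :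
    ∃ y : X → Y, (∀ᶠ x in 𝓝 x₀, y x ∈ S x) ∧ Tendsto y (𝓝 x₀) (𝓝 y₀) := by
  obtain ⟨hy₀, κ, -, N, hN, hκ⟩ := hS
  have hclose : ∀ᶠ x in 𝓝 x₀, ∃ y ∈ S x, dist y y₀ ≤ (κ + 1) * ‖x - x₀‖ := by
    filter_upwards [hN, hne] with x hxN hSx
    rcases eq_or_ne x x₀ with rfl | hx
    · exact ⟨y₀, hy₀, by simp⟩
    -- the infimum need not be attained, hence the positive slack `‖x - x₀‖`
    have hlt : infDist y₀ (S x) < κ * ‖x - x₀‖ + ‖x - x₀‖ :=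
      (hκ x hxN).trans_lt <| lt_add_of_pos_right _ <| norm_pos_iff.2 (sub_ne_zero.2 hx)
    obtain ⟨y, hyS, hy⟩ := (infDist_lt_iff hSx).1 hlt
    exact ⟨y, hyS, by rw [dist_comm]; linarith⟩
  have : Nonempty Y := ⟨y₀⟩
  choose! y hyS hy using fun x (hx : ∃ y ∈ S x, dist y y₀ ≤ (κ + 1) * ‖x - x₀‖) => hx
  refine ⟨y, hclose.mono hyS, tendsto_iff_dist_tendsto_zero.2 ?_⟩
  have hbound : Tendsto (fun x => (κ + 1) * ‖x - x₀‖) (𝓝 x₀) (𝓝 0) := by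
    simpa using (tendsto_norm_sub_self x₀).const_mul (κ + 1)
  exact squeeze_zero' (.of_forall fun _ => dist_nonneg) (hclose.mono hy) hbound

end InnerLipschitz

theorem HasStrictFDerivAt.hasFDerivAt_sub_of_tendsto {𝕜 X Y F : Type*}
    [NontriviallyNormedField 𝕜] [NormedAddCommGroup X] [NormedSpace 𝕜 X]
    [NormedAddCommGroup Y] [NormedSpace 𝕜 Y] [NormedAddCommGroup F] [NormedSpace 𝕜 F]
    {φ : X × Y → F} {D : X × Y →L[𝕜] F} {x₀ : X} {y₀ : Y} (hD : HasStrictFDerivAt φ D (x₀, y₀))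
    {y : X → Y} (hy : Tendsto y (𝓝 x₀) (𝓝 y₀)) :
    HasFDerivAt (fun x => φ (x, y x) - φ (x₀, y x)) (D.comp (.inl 𝕜 X Y)) x₀ := by
  have hpair : Tendsto (fun x => ((x, y x), (x₀, y x))) (𝓝 x₀) (𝓝 ((x₀, y₀), (x₀, y₀))) :=
    (tendsto_id.prodMk_nhds hy).prodMk_nhds (tendsto_const_nhds.prodMk_nhds hy)
  refine .of_isLittleO (Asymptotics.isLittleO_norm_right.1 ?_)
  have h := (hD.isLittleO.comp_tendsto hpair).norm_right
  simp only [comp_def, Prod.mk_sub_mk, sub_self, Prod.norm_mk, norm_zero, norm_nonneg,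
    sup_of_le_left] at h
  simpa using h

section Saddle

variable {X Y : Type*} [NormedAddCommGroup X] [NormedSpace ℝ X]
  [NormedAddCommGroup Y] [NormedSpace ℝ Y]

theorem IsLocallyInnerLipschitzAt.hasFDerivAt_zero {f : X → Y → ℝ} {S : X → Set Y}
    {D : X × Y →L[ℝ] ℝ} {x₀ : X} {y₀ : Y}
    (hS : IsLocallyInnerLipschitzAt S x₀ y₀) (hD : HasStrictFDerivAt (uncurry f) D (x₀, y₀))
    (hmax : ∀ y, f x₀ y ≤ f x₀ y₀) (hmin : ∀ᶠ x in 𝓝 x₀, ∀ y ∈ S x, f x₀ y₀ ≤ f x y)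
    (hne : ∀ᶠ x in 𝓝 x₀, (S x).Nonempty) :
    HasFDerivAt (f · y₀) (0 : X →L[ℝ] ℝ) x₀ := by
  obtain ⟨y, hyS, hy⟩ := hS.exists_tendsto_selection hne
  have hloc : IsLocalMin (fun x => f x (y x) - f x₀ (y x)) x₀ := by
    filter_upwards [hyS, hmin] with x hyx hminx
    simpa only [sub_self, sub_nonneg] using (hmax (y x)).trans (hminx _ hyx)
  have hzero : D.comp (.inl ℝ X Y) = 0 :=
    hloc.hasFDerivAt_eq_zero (hD.hasFDerivAt_sub_of_tendsto (𝕜 := ℝ) hy)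
  have hslice := hD.hasFDerivAt.comp x₀ (hasFDerivAt_prodMk_left (𝕜 := ℝ) x₀ y₀)
  rwa [hzero] at hslice

theorem IsMinimaxPoint.isSaddlePoint {f : X → Y → ℝ} {p : X × Y} {D : X × Y →L[ℝ] ℝ}
    (hp : IsMinimaxPoint f p) (hD : HasStrictFDerivAt (uncurry f) D p)
    (hinvex : fderiv ℝ (f · p.2) p.1 = 0 → ∀ x, f p.1 p.2 ≤ f x p.2)
    (hne : ∀ᶠ x in 𝓝 p.1, ∃ y, ∀ y', f x y' ≤ f x y)
    (hLip : IsLocallyInnerLipschitzAt (fun x => {y | ∀ y', f x y' ≤ f x y}) p.1 p.2) :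
    IsSaddlePoint f p := by
  have : Nonempty Y := ⟨p.2⟩
  have hmin : ∀ x, ∀ y ∈ {y | ∀ y', f x y' ≤ f x y}, f p.1 p.2 ≤ f x y :=
    fun x _ hy => (hp.2 x).trans (ciSup_le hy)
  exact ⟨hp.1, hinvex (hLip.hasFDerivAt_zero hD hp.1 (.of_forall hmin) hne).fderiv⟩

theorem IsMaximinPoint.isSaddlePoint {f : X → Y → ℝ} {p : X × Y} {D : X × Y →L[ℝ] ℝ}
    (hp : IsMaximinPoint f p) (hD : HasStrictFDerivAt (uncurry f) D p)
    (hincave : fderiv ℝ (f p.1 ·) p.2 = 0 → ∀ y, f p.1 y ≤ f p.1 p.2)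
    (hne : ∀ᶠ y in 𝓝 p.2, ∃ x, ∀ x', f x y ≤ f x' y)
    (hLip : IsLocallyInnerLipschitzAt (fun y => {x | ∀ x', f x y ≤ f x' y}) p.2 p.1) :
    IsSaddlePoint f p := by
  have : Nonempty X := ⟨p.1⟩
  -- `(y, x) ↦ -f x y` turns maximin points of `f` into minimax points
  let g : Y → X → ℝ := fun y x => -f x y
  have hg : HasStrictFDerivAt (uncurry g)
      (-(D.comp (ContinuousLinearEquiv.prodComm ℝ Y X : Y × X →L[ℝ] X × Y))) p.swap :=
    (hD.comp p.swap (ContinuousLinearEquiv.prodComm ℝ Y X).hasStrictFDerivAt).neg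
  have hmin : ∀ y, ∀ x ∈ {x | ∀ x', f x y ≤ f x' y}, g p.2 p.1 ≤ g y x :=
    fun y _ hx => neg_le_neg ((le_ciInf hx).trans (hp.2 y))
  have hzero := hLip.hasFDerivAt_zero hg (fun x => neg_le_neg (hp.1 x)) (.of_forall hmin) hne
  exact ⟨hincave (by simpa [g] using hzero.fun_neg.fderiv), hp.1⟩

end Saddle

/-- Under local inner Lipschitz continuity of the best response maps, every minimax point
and every maximin point of an invex-incave minimax problem is a saddle point:
`E = M̲ = M̄`. -/
theorem minimax_eq_saddle_of_innerLipschitz {nx ny : ℕ}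
    (f : EuclideanSpace ℝ (Fin nx) → EuclideanSpace ℝ (Fin ny) → ℝ)
    (hf : ContDiff ℝ 1 (fun p : EuclideanSpace ℝ (Fin nx) × EuclideanSpace ℝ (Fin ny) =>
      f p.1 p.2))
    (hinvex : ∀ y x, fderiv ℝ (fun x' => f x' y) x = 0 → ∀ x', f x y ≤ f x' y)
    (hincave : ∀ x y, fderiv ℝ (fun y' => f x y') y = 0 → ∀ y', f x y' ≤ f x y)
    (hinc : ∀ y x, ∃ K : Set (EuclideanSpace ℝ (Fin nx)),
      IsCompact K ∧ ∀ z ∉ K, f x y < f z y)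
    (hdec : ∀ x y, ∃ K : Set (EuclideanSpace ℝ (Fin ny)),
      IsCompact K ∧ ∀ z ∉ K, f x z < f x y)
    (Mlo Mhi E : Set (EuclideanSpace ℝ (Fin nx) × EuclideanSpace ℝ (Fin ny)))
    (hMlo : Mlo = {p | (∀ b, f p.1 b ≤ f p.1 p.2) ∧ ∀ a, f p.1 p.2 ≤ ⨆ y', f a y'})
    (hMhi : Mhi = {p | (∀ a, f p.1 p.2 ≤ f a p.2) ∧ ∀ b, (⨅ x', f x' b) ≤ f p.1 p.2})
    (hE : E = {p | (∀ b, f p.1 b ≤ f p.1 p.2) ∧ ∀ a, f p.1 p.2 ≤ f a p.2})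
    -- local inner Lipschitz continuity of BR_y at every minimax point:
    (hLipY : ∀ p ∈ Mlo, ∃ κ : ℝ, 0 ≤ κ ∧ ∃ N ∈ nhds p.1, ∀ x ∈ N,
      Metric.infDist p.2 {y | ∀ y', f x y' ≤ f x y} ≤ κ * ‖x - p.1‖)
    -- local inner Lipschitz continuity of BR_x at every maximin point:
    (hLipX : ∀ p ∈ Mhi, ∃ κ : ℝ, 0 ≤ κ ∧ ∃ N ∈ nhds p.2, ∀ y ∈ N,
      Metric.infDist p.1 {x | ∀ x', f x y ≤ f x' y} ≤ κ * ‖y - p.2‖) :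
    E = Mlo ∧ E = Mhi := by
  have hD : ∀ p, HasStrictFDerivAt (uncurry f) (fderiv ℝ (uncurry f) p) p :=
    fun p => hf.contDiffAt.hasStrictFDerivAt one_ne_zero
  have hmaxY : ∀ x, ∃ y, ∀ y', f x y' ≤ f x y := fun x =>
    let ⟨K, hK, hlt⟩ := hdec x 0
    (hf.continuous.comp (.prodMk_right x)).exists_forall_ge' 0
      (mem_cocompact.2 ⟨K, hK, fun z hz => (hlt z hz).le⟩)
  have hminX : ∀ y, ∃ x, ∀ x', f x y ≤ f x' y := fun y =>
    let ⟨K, hK, hlt⟩ := hinc y 0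
    (hf.continuous.comp (.prodMk_left y)).exists_forall_le' 0
      (mem_cocompact.2 ⟨K, hK, fun z hz => (hlt z hz).le⟩)
  subst hMlo hMhi hE
  refine ⟨Set.ext fun p => ⟨fun hp => ?_, fun hp => ?_⟩,
    Set.ext fun p => ⟨fun hp => ?_, fun hp => ?_⟩⟩
  · refine IsSaddlePoint.isMinimaxPoint hp fun x => ?_
    obtain ⟨y, hy⟩ := hmaxY x
    exact ⟨f x y, forall_mem_range.2 hy⟩
  · exact IsMinimaxPoint.isSaddlePoint hp (hD p) (hinvex p.2 p.1) (.of_forall hmaxY)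
      ⟨hp.1, hLipY p hp⟩
  · refine IsSaddlePoint.isMaximinPoint hp fun y => ?_
    obtain ⟨x, hx⟩ := hminX y
    exact ⟨f x y, forall_mem_range.2 hx⟩
  · exact IsMaximinPoint.isSaddlePoint hp (hD p) (hincave p.1 p.2) (.of_forall hminX)
      ⟨hp.1, hLipX p hp⟩
end

section
/- Let f : ℝ^{n_x} × ℝ^{n_y} → ℝ satisfy the two-sided PL condition with constants μ₁, μ₂ > 0 and be continuously differentiable. Then for all (x, y): ‖∇_x f(x, y)‖ ≥ μ₁ · d(x, BR_x(y)), where BR_x(y) = argmin_x f(x, y) (assumed non-empty). -/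
/-!
Ekeland's variational principle, which in a proper space is just the existence of a minimiser of
`g + σ · dist · x`, applied to `g = √(f(·, y) - m)` with `m` the minimum value: at a `σ`-Ekeland
point `z` of `g`, the derivative of `f(·, y) = m + g²` has norm at most `2σ g(z)`, which the PL
inequality forbids for `σ < √(μ₁ / 2)` unless `g(z) = 0`. Hence `√(μ₁ / 2) · d(x, BRₓ(y)) ≤ g(x)`,
i.e. the quadratic growth `f(x, y) - m ≥ (μ₁ / 2) d²`, and PL at `x` turns this into the error bound.
-/

open Filter Topology Metric

section Ekeland

variable {X : Type*} [PseudoMetricSpace X] [ProperSpace X]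

theorem Continuous.exists_ekeland_point {g : X → ℝ} (hg : Continuous g)
    (hbdd : BddBelow (Set.range g)) {σ : ℝ} (hσ : 0 < σ) (x₀ : X) :
    ∃ x, g x + σ * dist x x₀ ≤ g x₀ ∧ ∀ z, g x ≤ g z + σ * dist z x := by
  obtain ⟨b, hb⟩ := hbdd
  have hcoercive : Tendsto (fun z => g z + σ * dist z x₀) (cocompact X) atTop :=
    tendsto_atTop_add_left_of_le _ b (fun z => hb ⟨z, rfl⟩)
      ((tendsto_dist_right_cocompact_atTop x₀).const_mul_atTop hσ)
  obtain ⟨x, hx⟩ := (show Continuous fun z => g z + σ * dist z x₀ by fun_prop).exists_forall_le'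
    x₀ (hcoercive.eventually_ge_atTop _)
  refine ⟨x, by simpa using hx x₀, fun z => ?_⟩
  have := hx z
  nlinarith [dist_triangle z x x₀]

theorem mul_infDist_zeroSet_le {g : X → ℝ} (hg : Continuous g) (hg0 : ∀ z, 0 ≤ g z) {c : ℝ}
    (hslope : ∀ σ, 0 < σ → σ < c → ∀ z, (∀ w, g z ≤ g w + σ * dist w z) → g z = 0) (x : X) :
    c * infDist x {z | g z = 0} ≤ g x := by
  set d := infDist x {z | g z = 0}
  by_contra! hlt
  have hd : 0 < d := by
    refine infDist_nonneg.lt_of_ne fun hd => ?_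
    rw [show d = 0 from hd.symm, mul_zero] at hlt
    exact (hg0 x).not_gt hlt
  obtain ⟨σ, hσ₁, hσ₂⟩ := exists_between ((div_lt_iff₀ hd).mpr hlt)
  have hσ : 0 < σ := (div_nonneg (hg0 x) hd.le).trans_lt hσ₁
  obtain ⟨xh, hxh, hmin⟩ := hg.exists_ekeland_point ⟨0, by rintro _ ⟨z, rfl⟩; exact hg0 z⟩ hσ x
  have hd_le : d ≤ dist x xh := infDist_le_dist_of_mem (hslope σ hσ hσ₂ xh hmin)
  rw [div_lt_iff₀ hd] at hσ₁
  nlinarith [hxh, hg0 xh, dist_comm x xh]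

end Ekeland

section PL

variable {E : Type*} [NormedAddCommGroup E] [NormedSpace ℝ E]

theorem norm_fderiv_le_of_eventually_ge {φ : E → ℝ} {z : E} (hφ : DifferentiableAt ℝ φ z)
    {K : ℝ} (hK : 0 ≤ K) (h : ∀ᶠ v in 𝓝 0, φ z - K * ‖v‖ ≤ φ (z + v)) :
    ‖fderiv ℝ φ z‖ ≤ K := by
  set L := fderiv ℝ φ z
  refine le_of_forall_pos_le_add fun ε hε => ?_
  have hlo := (hasFDerivAt_iff_isLittleO_nhds_zero.1 hφ.hasFDerivAt).def hε
  have hlower : ∀ᶠ v in 𝓝 (0 : E), -((K + ε) * ‖v‖) ≤ L v := by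
    filter_upwards [h, hlo] with v h₁ h₂
    rw [Real.norm_eq_abs, abs_le] at h₂
    linarith
  have hneg : ∀ᶠ v in 𝓝 (0 : E), -((K + ε) * ‖-v‖) ≤ L (-v) :=
    (continuous_neg.tendsto' (0 : E) 0 neg_zero).eventually hlower
  refine ContinuousLinearMap.opNorm_le_of_nhds_zero (by positivity) ?_
  filter_upwards [hlower, hneg] with v h₁ h₂
  rw [map_neg, norm_neg] at h₂
  rw [Real.norm_eq_abs, abs_le]
  constructor <;> linarith

theorem norm_fderiv_le_of_sqrt_sub_ekeland {φ : E → ℝ} {z : E} (hφ : DifferentiableAt ℝ φ z)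
    {m σ : ℝ} (hσ : 0 ≤ σ) (hm : ∀ w, m ≤ φ w)
    (hz : ∀ w, √(φ z - m) ≤ √(φ w - m) + σ * dist w z) :
    ‖fderiv ℝ φ z‖ ≤ 2 * σ * √(φ z - m) := by
  refine norm_fderiv_le_of_eventually_ge hφ (by positivity) (Eventually.of_forall fun v => ?_)
  have hv := hz (z + v)
  rw [dist_self_add_left] at hv
  have hsq_z := Real.sq_sqrt (sub_nonneg.2 (hm z))
  have hsq_v := Real.sq_sqrt (sub_nonneg.2 (hm (z + v)))
  have hb := mul_nonneg hσ (norm_nonneg v)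
  have ha := Real.sqrt_nonneg (φ z - m)
  -- squaring `√(φ z - m) - σ‖v‖ ≤ √(φ (z + v) - m)` is only legitimate when the left side is
  -- nonnegative; otherwise `φ z - m - 2σ √(φ z - m) ‖v‖ ≤ 0` already
  rcases le_total (√(φ z - m)) (σ * ‖v‖) with hab | hab
  · nlinarith [sq_nonneg (√(φ (z + v) - m))]
  · nlinarith

theorem mul_infDist_sq_le_of_pl [ProperSpace E] {φ : E → ℝ} (hφ : Differentiable ℝ φ)
    {μ m : ℝ} (hμ : 0 ≤ μ) (hm : ∀ z, m ≤ φ z)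
    (hPL : ∀ z, 2 * μ * (φ z - m) ≤ ‖fderiv ℝ φ z‖ ^ 2) (x : E) :
    μ / 2 * infDist x {z | φ z = m} ^ 2 ≤ φ x - m := by
  have hzero : {z | φ z = m} = {z | √(φ z - m) = 0} := by
    ext z
    change φ z = m ↔ √(φ z - m) = 0
    rw [Real.sqrt_eq_zero', sub_nonpos]
    exact ⟨fun h => h.le, fun h => h.antisymm (hm z)⟩
  have hslope : ∀ σ, 0 < σ → σ < √(μ / 2) → ∀ z,
      (∀ w, √(φ z - m) ≤ √(φ w - m) + σ * dist w z) → √(φ z - m) = 0 := by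
    intro σ hσ hσμ z hz
    have hgrad := norm_fderiv_le_of_sqrt_sub_ekeland (hφ z) hσ.le hm hz
    have hσ_sq : σ ^ 2 < μ / 2 := (Real.lt_sqrt hσ.le).1 hσμ
    have hPLz := hPL z
    rw [← Real.sq_sqrt (sub_nonneg.2 (hm z))] at hPLz
    by_contra hne
    have hpos := (Real.sqrt_nonneg (φ z - m)).lt_of_ne' hne
    nlinarith [pow_le_pow_left₀ (norm_nonneg _) hgrad 2, mul_pos hpos hpos]
  have hcont := hφ.continuous
  have hbound := mul_infDist_zeroSet_le (g := fun z => √(φ z - m)) (by fun_prop)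
    (fun z => Real.sqrt_nonneg _) hslope x
  rw [← hzero] at hbound
  calc μ / 2 * infDist x {z | φ z = m} ^ 2 = (√(μ / 2) * infDist x {z | φ z = m}) ^ 2 := by
        rw [mul_pow, Real.sq_sqrt (by linarith)]
    _ ≤ √(φ x - m) ^ 2 :=
        pow_le_pow_left₀ (mul_nonneg (Real.sqrt_nonneg _) infDist_nonneg) hbound 2
    _ = φ x - m := Real.sq_sqrt (sub_nonneg.2 (hm x))

theorem mul_infDist_le_norm_fderiv_of_pl [ProperSpace E] {φ : E → ℝ} (hφ : Differentiable ℝ φ)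
    {μ m : ℝ} (hμ : 0 ≤ μ) (hm : ∀ z, m ≤ φ z)
    (hPL : ∀ z, 2 * μ * (φ z - m) ≤ ‖fderiv ℝ φ z‖ ^ 2) (x : E) :
    μ * infDist x {z | φ z = m} ≤ ‖fderiv ℝ φ x‖ := by
  have hgrowth := mul_infDist_sq_le_of_pl hφ hμ hm hPL x
  refine (pow_le_pow_iff_left₀ (mul_nonneg hμ infDist_nonneg) (norm_nonneg _) two_ne_zero).1 ?_
  calc (μ * infDist x {z | φ z = m}) ^ 2 = 2 * μ * (μ / 2 * infDist x {z | φ z = m} ^ 2) := by ring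
    _ ≤ 2 * μ * (φ x - m) := by gcongr
    _ ≤ ‖fderiv ℝ φ x‖ ^ 2 := hPL x

end PL

theorem twoSidedPL_error_bound_general {nx ny : ℕ}
    (f : EuclideanSpace ℝ (Fin nx) → EuclideanSpace ℝ (Fin ny) → ℝ)
    (hf : ContDiff ℝ 1 (fun p : EuclideanSpace ℝ (Fin nx) × EuclideanSpace ℝ (Fin ny) =>
      f p.1 p.2))
    (μ₁ : ℝ) (hμ₁ : 0 < μ₁)
    (hPLx : ∀ x y, 2 * μ₁ * (f x y - ⨅ x', f x' y) ≤ ‖fderiv ℝ (fun x' => f x' y) x‖ ^ 2)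
    (hBRne : ∀ y, {x | ∀ a, f x y ≤ f a y}.Nonempty) :
    ∀ x y, μ₁ * Metric.infDist x {x' | ∀ a, f x' y ≤ f a y} ≤
      ‖fderiv ℝ (fun x' => f x' y) x‖ := by
  intro x y
  obtain ⟨xs, hxs⟩ := hBRne y
  have hdiff : Differentiable ℝ (fun x' => f x' y) :=
    (hf.comp (contDiff_id.prodMk contDiff_const)).differentiable one_ne_zero
  have hinf : ⨅ x', f x' y = f xs y :=
    (ciInf_le ⟨f xs y, by rintro _ ⟨a, rfl⟩; exact hxs a⟩ xs).antisymm (le_ciInf hxs)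
  have hargmin : {x' | ∀ a, f x' y ≤ f a y} = {x' | f x' y = f xs y} := by
    ext x'
    exact ⟨fun h => (h xs).antisymm (hxs x'), fun h a => h ▸ hxs a⟩
  rw [hargmin]
  exact mul_infDist_le_norm_fderiv_of_pl hdiff hμ₁.le hxs (fun z => hinf ▸ hPLx z y) x

/-- The two-sided PL condition implies the global error bound
`‖∇ₓ f(x,y)‖ ≥ μ₁ · d(x, BRₓ(y))`. -/
theorem twoSidedPL_error_bound {nx ny : ℕ}
    (f : EuclideanSpace ℝ (Fin nx) → EuclideanSpace ℝ (Fin ny) → ℝ)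
    (hf : ContDiff ℝ 1 (fun p : EuclideanSpace ℝ (Fin nx) × EuclideanSpace ℝ (Fin ny) =>
      f p.1 p.2))
    (μ₁ μ₂ : ℝ) (hμ₁ : 0 < μ₁) (hμ₂ : 0 < μ₂)
    (hPLx : ∀ x y, 2 * μ₁ * (f x y - ⨅ x', f x' y) ≤ ‖fderiv ℝ (fun x' => f x' y) x‖ ^ 2)
    (hPLy : ∀ x y, 2 * μ₂ * ((⨆ y', f x y') - f x y) ≤ ‖fderiv ℝ (fun y' => f x y') y‖ ^ 2)
    (hBRne : ∀ y, {x | ∀ a, f x y ≤ f a y}.Nonempty) :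
    ∀ x y, μ₁ * Metric.infDist x {x' | ∀ a, f x' y ≤ f a y} ≤
      ‖fderiv ℝ (fun x' => f x' y) x‖ :=
  twoSidedPL_error_bound_general f hf μ₁ hμ₁ hPLx hBRne
end

section
/- Let f : ℝⁿ → ℝ be differentiable. If f satisfies the α-PL condition locally on a neighborhood N^{PL} of the minimizer set P and f is invex, then there exists a smaller neighborhood N^G ⊆ N^{PL} of P such that the gradient-flow trajectory of g(x) = (f(x) − min f)^{(α−1)/α} starting from any x ∈ N^G stays in N^{PL} and reaches P in finite time T ≤ g(x) (α/(α−1))² μ^{−2/α}. -/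
/-! With `g = (f - f*) ^ ((α - 1) / α)`, the α-PL inequality gives
`‖∇g‖ ≥ c := (α - 1) / α · μ ^ (1 / α)` on `N^PL` off the minimizer set. Along the flow
`d/dt g(x t) = -‖∇g‖² ≤ -c ‖ẋ‖`, so the path travelled by time `t` has length at most
`(g (x 0) - g (x t)) / c`; started where `g (x 0) / c` is below the distance to the complement
of `N^PL`, the trajectory never leaves `N^PL`. There `d/dt g(x t) ≤ -c²` while `g > 0`, so `g`
vanishes by time `g (x 0) / c²`. -/

open Set Metric

theorem antitoneOn_Ici_of_hasDerivAt_nonpos_of_pos {φ φ' : ℝ → ℝ} {a : ℝ}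
    (hcont : ContinuousOn φ (Ici a)) (hnn : ∀ t ∈ Ici a, 0 ≤ φ t)
    (hderiv : ∀ t ∈ Ioi a, 0 < φ t → HasDerivAt φ (φ' t) t)
    (hφ' : ∀ t ∈ Ioi a, 0 < φ t → φ' t ≤ 0) : AntitoneOn φ (Ici a) := by
  intro s hs t ht hst
  by_contra! hlt
  set m := (φ s + φ t) / 2 with hm_def
  have hm : 0 < m := by linarith [hnn s hs]
  have hsm : φ s ≤ m := by linarith
  have hmt : m < φ t := by linarith
  -- `u` is the last time in `[s, t]` at which `φ ≤ m`; past it `φ > m > 0`, so `φ` decreases.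
  set K := Icc s t ∩ φ ⁻¹' Iic m
  have hKbdd : BddAbove K := ⟨t, fun r hr => hr.1.2⟩
  have huK : sSup K ∈ K :=
    ((hcont.mono (Icc_subset_Ici_iff hst |>.2 hs)).preimage_isClosed_of_isClosed isClosed_Icc
      isClosed_Iic).csSup_mem ⟨s, ⟨le_rfl, hst⟩, hsm⟩ hKbdd
  set u := sSup K
  have hsu : s ≤ u := huK.1.1
  have hut : u ≤ t := huK.1.2
  have hpos : ∀ r ∈ Ioo u t, 0 < φ r := fun r hr => by
    by_contra! hr'
    exact (le_csSup hKbdd ⟨⟨hsu.trans hr.1.le, hr.2.le⟩, hr'.trans hm.le⟩).not_gt hr.1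
  have hIoi : ∀ r ∈ Ioo u t, r ∈ Ioi a := fun r hr => lt_of_le_of_lt (hs.trans hsu) hr.1
  have hanti : AntitoneOn φ (Icc u t) := by
    refine antitoneOn_of_hasDerivWithinAt_nonpos (convex_Icc u t)
      (hcont.mono (Icc_subset_Ici_iff hut |>.2 (hs.trans hsu))) (f' := φ') ?_ ?_ <;>
      rw [interior_Icc] <;> intro r hr
    · exact (hderiv r (hIoi r hr) (hpos r hr)).hasDerivWithinAt
    · exact hφ' r (hIoi r hr) (hpos r hr)
  have hum : φ u ≤ m := huK.2
  linarith [hanti (left_mem_Icc.2 hut) (right_mem_Icc.2 hut) hut]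

theorem exists_first_exit_time {X : Type*} [TopologicalSpace X] {x : ℝ → X} {U : Set X}
    (hU : IsOpen U) {a t : ℝ} (hat : a ≤ t) (hx : ContinuousOn x (Icc a t)) (hxt : x t ∉ U) :
    ∃ τ ∈ Icc a t, x τ ∉ U ∧ ∀ r ∈ Ico a τ, x r ∈ U := by
  set K := Icc a t ∩ x ⁻¹' Uᶜ
  have hKbdd : BddBelow K := ⟨a, fun r hr => hr.1.1⟩
  have hτK : sInf K ∈ K :=
    (hx.preimage_isClosed_of_isClosed isClosed_Icc hU.isClosed_compl).csInf_mem
      ⟨t, ⟨hat, le_rfl⟩, hxt⟩ hKbdd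
  refine ⟨sInf K, hτK.1, hτK.2, fun r hr => ?_⟩
  by_contra hrU
  exact (csInf_le hKbdd ⟨⟨hr.1, hr.2.le.trans hτK.1.2⟩, hrU⟩).not_gt hr.2

theorem closedBall_subset_of_ofReal_lt_infEDist {X : Type*} [PseudoMetricSpace X] {x : X}
    {s : Set X} {r : ℝ} (h : ENNReal.ofReal r < infEDist x sᶜ) : closedBall x r ⊆ s := by
  intro z hz
  by_contra hzs
  have : infEDist x sᶜ ≤ ENNReal.ofReal r := by
    calc infEDist x sᶜ ≤ edist x z := infEDist_le_edist_of_mem hzs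
      _ = ENNReal.ofReal (dist x z) := edist_dist x z
      _ ≤ ENNReal.ofReal r := ENNReal.ofReal_le_ofReal (dist_comm z x ▸ hz)
  exact this.not_gt h

variable {F : Type*} [NormedAddCommGroup F] [InnerProductSpace ℝ F] [CompleteSpace F]

theorem gradient_eq_zero_of_nonneg {g : F → ℝ} (hg0 : ∀ y, 0 ≤ g y) {y : F} (hy : g y = 0) :
    gradient g y = 0 := by
  simp [gradient, (show IsLocalMin g y from .of_forall fun z => hy ▸ hg0 z).fderiv_eq_zero]

def IsGradientFlow (g : F → ℝ) (x : ℝ → F) : Prop :=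
  ∀ t, 0 ≤ t → HasDerivAt x (-gradient g (x t)) t

namespace IsGradientFlow

variable {g : F → ℝ} {x : ℝ → F} {c : ℝ}

theorem continuousOn (hx : IsGradientFlow g x) : ContinuousOn x (Ici 0) :=
  fun t ht => (hx t ht).continuousAt.continuousWithinAt

theorem hasDerivAt_comp (hx : IsGradientFlow g x) {t : ℝ} (ht : 0 ≤ t)
    (hg : DifferentiableAt ℝ g (x t)) :
    HasDerivAt (fun s => g (x s)) (-‖gradient g (x t)‖ ^ 2) t := by
  have h := hg.hasFDerivAt.comp_hasDerivAt t (hx t ht)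
  rwa [map_neg, ← inner_gradient_left, real_inner_self_eq_norm_sq] at h

theorem antitoneOn (hx : IsGradientFlow g x) (hgc : Continuous g) (hg0 : ∀ y, 0 ≤ g y)
    (hgd : ∀ y, 0 < g y → DifferentiableAt ℝ g y) : AntitoneOn (fun t => g (x t)) (Ici 0) :=
  antitoneOn_Ici_of_hasDerivAt_nonpos_of_pos (hgc.comp_continuousOn hx.continuousOn)
    (fun _ _ => hg0 _) (fun _ ht hpos => hx.hasDerivAt_comp (le_of_lt ht) (hgd _ hpos))
    (fun _ _ _ => neg_nonpos.2 (sq_nonneg _))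

theorem hasDerivWithinAt_Ici (hx : IsGradientFlow g x) (hgc : Continuous g) (hg0 : ∀ y, 0 ≤ g y)
    (hgd : ∀ y, 0 < g y → DifferentiableAt ℝ g y) {t : ℝ} (ht : 0 ≤ t) :
    HasDerivWithinAt (fun s => g (x s)) (-‖gradient g (x t)‖ ^ 2) (Ici t) t := by
  rcases (hg0 (x t)).lt_or_eq with hpos | hzero
  · exact (hx.hasDerivAt_comp ht (hgd _ hpos)).hasDerivWithinAt
  -- at a zero of `g` the flow is stationary, and `g ∘ x` stays `0` from then on
  rw [gradient_eq_zero_of_nonneg hg0 hzero.symm, norm_zero, sq, mul_zero, neg_zero]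
  refine (hasDerivWithinAt_const t (Ici t) (0 : ℝ)).congr (fun s hs => ?_) hzero.symm
  exact le_antisymm (hzero ▸ hx.antitoneOn hgc hg0 hgd ht (ht.trans hs) hs) (hg0 _)

theorem norm_sub_le (hx : IsGradientFlow g x) (hgc : Continuous g) (hg0 : ∀ y, 0 ≤ g y)
    (hgd : ∀ y, 0 < g y → DifferentiableAt ℝ g y) (hc : 0 < c) {b : ℝ}
    (hgrad : ∀ r ∈ Ico 0 b, 0 < g (x r) → c ≤ ‖gradient g (x r)‖) :
    ∀ s ∈ Icc 0 b, ‖x s - x 0‖ ≤ (g (x 0) - g (x s)) / c := by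
  refine image_norm_le_of_norm_deriv_right_le_deriv_boundary'
    (f' := fun r => -gradient g (x r)) (B' := fun r => ‖gradient g (x r)‖ ^ 2 / c)
    ((hx.continuousOn.mono Icc_subset_Ici_self).sub continuousOn_const)
    (fun r hr => ((hx r hr.1).sub_const (x 0)).hasDerivWithinAt) (by simp)
    ((continuousOn_const.sub
      (hgc.comp_continuousOn (hx.continuousOn.mono Icc_subset_Ici_self))).div_const c)
    (fun r hr => by
      simpa using ((hx.hasDerivWithinAt_Ici hgc hg0 hgd hr.1).const_sub (g (x 0))).div_const c)
    (fun r hr => ?_)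
  rw [norm_neg, le_div_iff₀ hc, sq]
  rcases (hg0 (x r)).lt_or_eq with hpos | hzero
  · exact mul_le_mul_of_nonneg_left (hgrad r hr hpos) (norm_nonneg _)
  · simp [gradient_eq_zero_of_nonneg hg0 hzero.symm]

theorem mapsTo (hx : IsGradientFlow g x) (hgc : Continuous g) (hg0 : ∀ y, 0 ≤ g y)
    (hgd : ∀ y, 0 < g y → DifferentiableAt ℝ g y) (hc : 0 < c) {U : Set F} (hU : IsOpen U)
    (hgrad : ∀ y ∈ U, 0 < g y → c ≤ ‖gradient g y‖) (h0 : closedBall (x 0) (g (x 0) / c) ⊆ U) :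
    ∀ t, 0 ≤ t → x t ∈ U := by
  intro t ht
  by_contra hxt
  obtain ⟨τ, hτ, hxτ, hbefore⟩ :=
    exists_first_exit_time hU ht (hx.continuousOn.mono Icc_subset_Ici_self) hxt
  have hdist := hx.norm_sub_le hgc hg0 hgd hc (fun r hr => hgrad _ (hbefore r hr)) τ ⟨hτ.1, le_rfl⟩
  refine hxτ (h0 ?_)
  rw [mem_closedBall, dist_eq_norm]
  exact hdist.trans (div_le_div_of_nonneg_right (by linarith [hg0 (x τ)]) hc.le)

theorem apply_div_sq_eq_zero (hx : IsGradientFlow g x) (hgc : Continuous g) (hg0 : ∀ y, 0 ≤ g y)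
    (hgd : ∀ y, 0 < g y → DifferentiableAt ℝ g y) (hc : 0 < c)
    (hgrad : ∀ t, 0 ≤ t → 0 < g (x t) → c ≤ ‖gradient g (x t)‖) :
    g (x (g (x 0) / c ^ 2)) = 0 := by
  set T := g (x 0) / c ^ 2 with hT
  have hT0 : 0 ≤ T := by have := hg0 (x 0); positivity
  by_contra hne
  have hpos : ∀ r ∈ Icc 0 T, 0 < g (x r) := fun r hr =>
    ((hg0 _).lt_of_ne' hne).trans_le (hx.antitoneOn hgc hg0 hgd hr.1 hT0 hr.2)
  have hdecay : g (x T) ≤ g (x 0) - c ^ 2 * T := image_le_of_deriv_right_le_deriv_boundary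
    (f := fun r => g (x r)) (B := fun r => g (x 0) - c ^ 2 * r) (B' := fun _ => -c ^ 2)
    (hgc.comp_continuousOn (hx.continuousOn.mono Icc_subset_Ici_self))
    (fun r hr => hx.hasDerivWithinAt_Ici hgc hg0 hgd hr.1) (by simp) (by fun_prop)
    (fun r _ => (((hasDerivAt_id r).const_mul (c ^ 2)).const_sub _).hasDerivWithinAt.congr_deriv
      (by ring))
    (fun r hr => ?_) ⟨hT0, le_rfl⟩
  · have : c ^ 2 * T = g (x 0) := by rw [hT]; field_simp
    linarith [hpos T ⟨hT0, le_rfl⟩]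
  · have := hgrad r hr.1 (hpos r (Ico_subset_Icc_self hr))
    have : c ^ 2 ≤ ‖gradient g (x r)‖ ^ 2 := pow_le_pow_left₀ hc.le this 2
    linarith

end IsGradientFlow

theorem le_norm_gradient_rpow_sub {f : F → ℝ} {f' : F →L[ℝ] ℝ} {y : F} {fstar α μ : ℝ}
    (hα : 1 < α) (hμ : 0 < μ) (hf : HasFDerivAt f f' y) (hy : fstar < f y)
    (hPL : μ * (f y - fstar) ≤ ‖f'‖ ^ α) :
    (α - 1) / α * μ ^ (1 / α) ≤ ‖gradient (fun z => (f z - fstar) ^ ((α - 1) / α)) y‖ := by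
  set β := (α - 1) / α with hβ
  set u := f y - fstar
  have hu : 0 < u := sub_pos.2 hy
  have hα0 : 0 < α := by linarith
  have hg : HasFDerivAt (fun z => (f z - fstar) ^ β) ((β * u ^ (β - 1)) • f') y :=
    (hf.sub_const fstar).rpow_const (Or.inl hu.ne')
  have hroot : (μ * u) ^ (1 / α) ≤ ‖f'‖ := by
    calc (μ * u) ^ (1 / α) ≤ (‖f'‖ ^ α) ^ (1 / α) := by gcongr
      _ = ‖f'‖ := by rw [← Real.rpow_mul (norm_nonneg _), mul_one_div_cancel hα0.ne', Real.rpow_one]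
  have hexp : β - 1 + 1 / α = 0 := by rw [hβ]; field_simp; ring
  calc β * μ ^ (1 / α) = β * u ^ (β - 1) * (μ * u) ^ (1 / α) := by
        rw [Real.mul_rpow hμ.le hu.le, mul_mul_mul_comm, ← Real.rpow_add hu, hexp, Real.rpow_zero,
          mul_one]
    _ ≤ β * u ^ (β - 1) * ‖f'‖ := by gcongr
    _ = ‖gradient (fun z => (f z - fstar) ^ β) y‖ := by
        rw [gradient, LinearIsometryEquiv.norm_map, hg.fderiv, norm_smul, Real.norm_eq_abs,
          abs_of_nonneg (by positivity)]

theorem div_sq_mul_rpow_eq {α μ : ℝ} (hα : 1 < α) (hμ : 0 < μ) (r : ℝ) :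
    r / ((α - 1) / α * μ ^ (1 / α)) ^ 2 = r * (α / (α - 1)) ^ 2 * μ ^ (-(2 / α)) := by
  have hμ2 : (μ ^ (1 / α)) ^ 2 = μ ^ (2 / α) := by
    rw [← Real.rpow_natCast, ← Real.rpow_mul hμ.le]; ring_nf
  have : α - 1 ≠ 0 := by linarith
  rw [mul_pow, hμ2, Real.rpow_neg hμ.le]
  field_simp

theorem gradient_flow_reaches_minimizers_general {n : ℕ}
    (f : EuclideanSpace ℝ (Fin n) → ℝ) (fstar : ℝ) (α μ : ℝ)
    (hf : Differentiable ℝ f)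
    (hα : 1 < α) (hμ : 0 < μ)
    (hmin : ∀ x, fstar ≤ f x)
    (NPL : Set (EuclideanSpace ℝ (Fin n)))
    (hNPLopen : IsOpen NPL)
    (hPsub : {x | f x = fstar} ⊆ NPL)
    (hPL : ∀ x ∈ NPL, μ * (f x - fstar) ≤ ‖fderiv ℝ f x‖ ^ α)
    (g : EuclideanSpace ℝ (Fin n) → ℝ)
    (hg : g = fun x => (f x - fstar) ^ ((α - 1) / α)) :
    ∃ NG : Set (EuclideanSpace ℝ (Fin n)), IsOpen NG ∧
      {x | f x = fstar} ⊆ NG ∧ NG ⊆ NPL ∧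
      ∀ x0 ∈ NG, ∀ x : ℝ → EuclideanSpace ℝ (Fin n), x 0 = x0 →
        (∀ t : ℝ, 0 ≤ t → HasDerivAt x (-(gradient g (x t))) t) →
        (∀ t : ℝ, 0 ≤ t → x t ∈ NPL) ∧
        ∃ T : ℝ, 0 ≤ T ∧ T ≤ g x0 * (α / (α - 1)) ^ 2 * μ ^ (-(2 / α)) ∧
          f (x T) = fstar := by
  set c := (α - 1) / α * μ ^ (1 / α)
  have hβ : 0 < (α - 1) / α := div_pos (by linarith) (by linarith)
  have hc : 0 < c := by positivity
  have hg0 : ∀ y, 0 ≤ g y := fun y => hg ▸ Real.rpow_nonneg (sub_nonneg.2 (hmin y)) _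
  have hgc : Continuous g :=
    hg ▸ (hf.continuous.sub continuous_const).rpow_const fun _ => Or.inr hβ.le
  have hg_zero : ∀ y, g y = 0 ↔ f y = fstar := fun y => by
    rw [hg, Real.rpow_eq_zero (sub_nonneg.2 (hmin y)) hβ.ne', sub_eq_zero]
  have hg_pos : ∀ y, 0 < g y → fstar < f y := fun y hy =>
    (hmin y).lt_of_ne fun h => hy.ne' ((hg_zero y).2 h.symm)
  have hgd : ∀ y, 0 < g y → DifferentiableAt ℝ g y := fun y hy =>
    hg ▸ ((hf y).sub_const fstar).rpow_const (Or.inl (sub_pos.2 (hg_pos y hy)).ne')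
  have hgrad : ∀ y ∈ NPL, 0 < g y → c ≤ ‖gradient g y‖ := fun y hy hpos =>
    hg ▸ le_norm_gradient_rpow_sub hα hμ (hf y).hasFDerivAt (hg_pos y hpos) (hPL y hy)
  refine ⟨{y | ENNReal.ofReal (g y / c) < infEDist y NPLᶜ},
    isOpen_lt (ENNReal.continuous_ofReal.comp (hgc.div_const c)) continuous_infEDist,
    fun p hp => ?_,
    fun y hy => closedBall_subset_of_ofReal_lt_infEDist hy (mem_closedBall_self (by
      have := hg0 y; positivity)), ?_⟩
  · rw [Set.mem_ofPred_eq, (hg_zero p).2 hp, zero_div, ENNReal.ofReal_zero,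
      infEDist_pos_iff_notMem_closure, hNPLopen.isClosed_compl.closure_eq, notMem_compl_iff]
    exact hPsub hp
  · rintro _ hx0 x rfl (hflow : IsGradientFlow g x)
    have htrap := hflow.mapsTo hgc hg0 hgd hc hNPLopen hgrad
      (closedBall_subset_of_ofReal_lt_infEDist hx0)
    refine ⟨htrap, g (x 0) / c ^ 2, by have := hg0 (x 0); positivity,
      (div_sq_mul_rpow_eq hα hμ _).le, (hg_zero _).1 (hflow.apply_div_sq_eq_zero hgc hg0 hgd hc fun t ht => hgrad _ (htrap t ht))⟩

/-- For an invex function satisfying the α-PL condition locally near its minimizer set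
`P`, there is a smaller neighborhood `N^G` of `P` such that the gradient-flow trajectory
of `g = (f − min f)^((α−1)/α)` starting in `N^G` stays in `N^{PL}` and reaches `P` in
finite time `T ≤ g(x₀) (α/(α−1))² μ^{−2/α}`. -/
theorem gradient_flow_reaches_minimizers {n : ℕ}
    (f : EuclideanSpace ℝ (Fin n) → ℝ) (fstar : ℝ) (α μ : ℝ)
    (hf : Differentiable ℝ f)
    (hα : 1 < α) (hμ : 0 < μ)
    (hmin : ∀ x, fstar ≤ f x)
    (hinvex : ∀ x, fderiv ℝ f x = 0 → ∀ y, f x ≤ f y)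
    (NPL : Set (EuclideanSpace ℝ (Fin n)))
    (hNPLopen : IsOpen NPL)
    (hPsub : {x | f x = fstar} ⊆ NPL)
    (hPL : ∀ x ∈ NPL, μ * (f x - fstar) ≤ ‖fderiv ℝ f x‖ ^ α)
    (g : EuclideanSpace ℝ (Fin n) → ℝ)
    (hg : g = fun x => (f x - fstar) ^ ((α - 1) / α)) :
    ∃ NG : Set (EuclideanSpace ℝ (Fin n)), IsOpen NG ∧
      {x | f x = fstar} ⊆ NG ∧ NG ⊆ NPL ∧
      ∀ x0 ∈ NG, ∀ x : ℝ → EuclideanSpace ℝ (Fin n), x 0 = x0 →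
        (∀ t : ℝ, 0 ≤ t → HasDerivAt x (-(gradient g (x t))) t) →
        (∀ t : ℝ, 0 ≤ t → x t ∈ NPL) ∧
        ∃ T : ℝ, 0 ≤ T ∧ T ≤ g x0 * (α / (α - 1)) ^ 2 * μ ^ (-(2 / α)) ∧
          f (x T) = fstar :=
  gradient_flow_reaches_minimizers_general f fstar α μ hf hα hμ hmin NPL hNPLopen hPsub hPL g hg
end
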